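/- arXiv:2202.05404 — 7 statements merged into one kernel-verified Lean document; each statement's English description precedes it below -/
import Mathlib

section
/- Let I be a nonempty finite index set, μ : I → ℝ with μ_i > 0 for all i, D = diag(μ), and let P be an I×I real matrix with nonnegative entries whose rows each sum to 1. Let γ ∈ (0,1) and suppose η > max_{i∈I} [ γ (Σ_j μ_j P_{j i}) / (2 μ_i) ] − (2−γ)/2. Define M = D((1+η)I − γP). Then M + Mᵀ is positive definite; equivalently, M is positive definite in the sense that xᵀMx > 0 for all nonzero x. -/
open Matrix

/-!
Write `M = diag((1+η)μ) - W` with `W = γ D P ≥ 0`. For a nonnegative matrix `W`, AM-GM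
`2 x_i x_j ≤ x_i² + x_j²` bounds `xᵀWx` by `Σ_i (r_i + c_i)/2 · x_i²`, where `r_i`, `c_i` are the row
and column sums of `W`. Here `r_i = γ μ_i` because `P` is row-stochastic and `c_i = γ Σ_j μ_j P_{j i}`,
so the hypothesis on `η` says exactly that the diagonal `(1+η)μ_i` strictly dominates `(r_i + c_i)/2`.
-/

namespace Matrix

variable {I : Type*} [Fintype I]

theorem dotProduct_add_transpose_mulVec {R : Type*} [CommSemiring R] (M : Matrix I I R)
    (x : I → R) : x ⬝ᵥ ((M + Mᵀ) *ᵥ x) = x ⬝ᵥ (M *ᵥ x) + x ⬝ᵥ (M *ᵥ x) := by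
  rw [add_mulVec, dotProduct_add, dotProduct_mulVec x Mᵀ, vecMul_transpose, dotProduct_comm]

theorem dotProduct_mulVec_le_of_nonneg {W : Matrix I I ℝ} (hW : ∀ i j, 0 ≤ W i j)
    (x : I → ℝ) : x ⬝ᵥ (W *ᵥ x) ≤ ∑ i, (∑ j, W i j + ∑ j, W j i) / 2 * x i ^ 2 := by
  have hamgm : ∀ i j, x i * (W i j * x j) ≤ W i j * x i ^ 2 / 2 + W i j * x j ^ 2 / 2 :=
    fun i j => by nlinarith [mul_nonneg (hW i j) (sq_nonneg (x i - x j))]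
  calc x ⬝ᵥ (W *ᵥ x) = ∑ i, ∑ j, x i * (W i j * x j) := by
        simp only [dotProduct, mulVec, Finset.mul_sum]
    _ ≤ ∑ i, ∑ j, (W i j * x i ^ 2 / 2 + W i j * x j ^ 2 / 2) :=
        Finset.sum_le_sum fun i _ => Finset.sum_le_sum fun j _ => hamgm i j
    _ = ∑ i, ∑ j, W i j * x i ^ 2 / 2 + ∑ i, ∑ j, W j i * x i ^ 2 / 2 := by
        simp only [Finset.sum_add_distrib]
        exact congrArg _ Finset.sum_comm
    _ = ∑ i, (∑ j, W i j + ∑ j, W j i) / 2 * x i ^ 2 := by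
        rw [← Finset.sum_add_distrib]
        refine Finset.sum_congr rfl fun i _ => ?_
        rw [← Finset.sum_add_distrib, add_div, add_mul, Finset.sum_div, Finset.sum_mul,
          Finset.sum_div, Finset.sum_mul, ← Finset.sum_add_distrib]
        exact Finset.sum_congr rfl fun j _ => by ring

theorem dotProduct_diagonal_sub_mulVec_pos [DecidableEq I] {d : I → ℝ} {W : Matrix I I ℝ}
    (hW : ∀ i j, 0 ≤ W i j) (hd : ∀ i, (∑ j, W i j + ∑ j, W j i) / 2 < d i)
    {x : I → ℝ} (hx : x ≠ 0) : 0 < x ⬝ᵥ ((diagonal d - W) *ᵥ x) := by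
  have hdiag : x ⬝ᵥ (diagonal d *ᵥ x) = ∑ i, d i * x i ^ 2 := by
    simp only [dotProduct, mulVec_diagonal]
    exact Finset.sum_congr rfl fun i _ => by ring
  obtain ⟨i₀, hi₀⟩ := Function.ne_iff.mp hx
  have hgap : 0 < ∑ i, (d i - (∑ j, W i j + ∑ j, W j i) / 2) * x i ^ 2 :=
    Finset.sum_pos' (fun i _ => mul_nonneg (sub_pos.mpr (hd i)).le (sq_nonneg _))
      ⟨i₀, Finset.mem_univ _, mul_pos (sub_pos.mpr (hd i₀)) (pow_two_pos_of_ne_zero hi₀)⟩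
  simp only [sub_mul, Finset.sum_sub_distrib] at hgap
  rw [sub_mulVec, dotProduct_sub, hdiag]
  linarith [dotProduct_mulVec_le_of_nonneg hW x]

end Matrix

/-- Let `μ : I → ℝ` be positive, `D = diag(μ)`, `P` row-stochastic, `γ ∈ (0,1)` and
`η > max_i [γ (Σ_j μ_j P_{j i}) / (2 μ_i)] − (2−γ)/2`.  Then `M = D((1+η)I − γP)`
satisfies: `M + Mᵀ` is positive definite, and equivalently `xᵀMx > 0` for all
nonzero `x`. -/
theorem stmt_2 {I : Type*} [Fintype I] [Nonempty I] [DecidableEq I]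
    (μ : I → ℝ) (hμ : ∀ i, 0 < μ i)
    (P : Matrix I I ℝ) (hP0 : ∀ i j, 0 ≤ P i j) (hP1 : ∀ i, ∑ j, P i j = 1)
    (γ η : ℝ) (hγ : γ ∈ Set.Ioo (0 : ℝ) 1)
    (hη : η > (Finset.univ.sup' Finset.univ_nonempty fun i =>
        γ * (∑ j, μ j * P j i) / (2 * μ i)) - (2 - γ) / 2) :
    (∀ x : I → ℝ, x ≠ 0 →
        0 < x ⬝ᵥ (((diagonal μ * ((1 + η) • (1 : Matrix I I ℝ) - γ • P)) +
          (diagonal μ * ((1 + η) • (1 : Matrix I I ℝ) - γ • P))ᵀ) *ᵥ x)) ∧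
    (∀ x : I → ℝ, x ≠ 0 →
        0 < x ⬝ᵥ ((diagonal μ * ((1 + η) • (1 : Matrix I I ℝ) - γ • P)) *ᵥ x)) := by
  set W : Matrix I I ℝ := γ • (diagonal μ * P) with hW_def
  have hM : diagonal μ * ((1 + η) • (1 : Matrix I I ℝ) - γ • P) = diagonal ((1 + η) • μ) - W := by
    rw [hW_def, mul_sub, mul_smul_comm, mul_smul_comm, mul_one, diagonal_smul]
  have hW : ∀ i j, 0 ≤ W i j := fun i j => by
    simpa [hW_def, diagonal_mul] using mul_nonneg hγ.1.le (mul_nonneg (hμ i).le (hP0 i j))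
  have hdom : ∀ i, (∑ j, W i j + ∑ j, W j i) / 2 < ((1 + η) • μ) i := fun i => by
    have hi := (Finset.le_sup' (fun i => γ * (∑ j, μ j * P j i) / (2 * μ i))
      (Finset.mem_univ i)).trans_lt (sub_lt_iff_lt_add.mp hη)
    rw [div_lt_iff₀ (by linarith [hμ i])] at hi
    simp only [hW_def, Matrix.smul_apply, diagonal_mul, smul_eq_mul, Pi.smul_apply,
      ← Finset.mul_sum, hP1]
    linarith
  have hpos : ∀ x : I → ℝ, x ≠ 0 →
      0 < x ⬝ᵥ ((diagonal μ * ((1 + η) • (1 : Matrix I I ℝ) - γ • P)) *ᵥ x) := fun x hx => by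
    rw [hM]
    exact dotProduct_diagonal_sub_mulVec_pos hW hdom hx
  refine ⟨fun x hx => ?_, hpos⟩
  rw [dotProduct_add_transpose_mulVec]
  linarith [hpos x hx]
end

section
/- Let I be a nonempty finite index set, μ : I → ℝ with μ_i > 0 for all i, D = diag(μ), and let P be an I×I real matrix with nonnegative entries whose rows each sum to 1. Let γ ∈ [0,1] and η ∈ ℝ, and define M = D((1+η)I − γP). Then every eigenvalue λ of the symmetric matrix M + Mᵀ satisfies λ ≥ min_{i∈I} [ 2η μ_i + (2−γ) μ_i − γ Σ_j μ_j P_{j i} ]. -/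
/-!
By Gershgorin, an eigenvalue `λ` of `B = M + Mᵀ` satisfies `λ ≥ B k k - ∑_{j ≠ k} |B k j|` for
some `k`. The off-diagonal entries `-γ (μ k P k j + μ j P j k)` of `B` are nonpositive, so this
lower bound is exactly the `k`-th row sum of `B`, which is the `k`-th row sum of `M` plus its
`k`-th column sum, i.e. `μ k (1 + η - γ) + (1 + η) μ k - γ ∑ j, μ j P j k`.
-/

open Matrix

namespace Matrix

variable {n : Type*} [Fintype n] [DecidableEq n]

theorem exists_sum_row_le_of_hasEigenvalue {B : Matrix n n ℝ}
    (hB : ∀ i j, i ≠ j → B i j ≤ 0) {lam : ℝ}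
    (hlam : Module.End.HasEigenvalue (toLin' B) lam) : ∃ k, ∑ j, B k j ≤ lam := by
  obtain ⟨k, hk⟩ := eigenvalue_mem_ball hlam
  refine ⟨k, ?_⟩
  have hradius : ∑ j ∈ Finset.univ.erase k, ‖B k j‖ = -∑ j ∈ Finset.univ.erase k, B k j := by
    rw [← Finset.sum_neg_distrib]
    refine Finset.sum_congr rfl fun j hj => ?_
    rw [Real.norm_of_nonpos (hB k j (Finset.ne_of_mem_erase hj).symm)]
  rw [Metric.mem_closedBall, Real.dist_eq, hradius] at hk
  rw [← Finset.add_sum_erase _ _ (Finset.mem_univ k)]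
  linarith [neg_abs_le (lam - B k k)]

theorem exists_sum_row_add_sum_col_le_of_hasEigenvalue_add_transpose {B : Matrix n n ℝ}
    (hB : ∀ i j, i ≠ j → B i j ≤ 0) {lam : ℝ}
    (hlam : Module.End.HasEigenvalue (toLin' (B + Bᵀ)) lam) :
    ∃ k, ∑ j, B k j + ∑ j, B j k ≤ lam := by
  obtain ⟨k, hk⟩ := exists_sum_row_le_of_hasEigenvalue
    (fun i j hij => add_nonpos (hB i j hij) (hB j i hij.symm)) hlam
  exact ⟨k, by simpa only [add_apply, transpose_apply, Finset.sum_add_distrib] using hk⟩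

variable (μ : n → ℝ) (P : Matrix n n ℝ) (γ η : ℝ)

theorem diagonal_mul_smul_one_sub_smul_apply (i j : n) :
    (diagonal μ * ((1 + η) • (1 : Matrix n n ℝ) - γ • P)) i j
      = μ i * ((1 + η) * (1 : Matrix n n ℝ) i j - γ * P i j) := by
  simp only [diagonal_mul, sub_apply, smul_apply, smul_eq_mul]

theorem diagonal_mul_smul_one_sub_smul_apply_nonpos (hμ : ∀ i, 0 ≤ μ i)
    (hP0 : ∀ i j, 0 ≤ P i j) (hγ : 0 ≤ γ) {i j : n} (hij : i ≠ j) :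
    (diagonal μ * ((1 + η) • (1 : Matrix n n ℝ) - γ • P)) i j ≤ 0 := by
  rw [diagonal_mul_smul_one_sub_smul_apply, one_apply_ne hij, mul_zero, zero_sub, mul_neg]
  exact neg_nonpos.mpr (mul_nonneg (hμ i) (mul_nonneg hγ (hP0 i j)))

theorem sum_diagonal_mul_smul_one_sub_smul_row (hP1 : ∀ i, ∑ j, P i j = 1) (k : n) :
    ∑ j, (diagonal μ * ((1 + η) • (1 : Matrix n n ℝ) - γ • P)) k j = μ k * (1 + η - γ) := by
  simp only [diagonal_mul_smul_one_sub_smul_apply, ← Finset.mul_sum, Finset.sum_sub_distrib,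
    one_apply, mul_ite, mul_one, mul_zero, Finset.sum_ite_eq, Finset.mem_univ, if_true, hP1]

theorem sum_diagonal_mul_smul_one_sub_smul_col (k : n) :
    ∑ j, (diagonal μ * ((1 + η) • (1 : Matrix n n ℝ) - γ • P)) j k
      = (1 + η) * μ k - γ * ∑ j, μ j * P j k := by
  simp only [diagonal_mul_smul_one_sub_smul_apply, mul_sub, Finset.sum_sub_distrib, one_apply,
    mul_ite, mul_one, mul_zero, Finset.sum_ite_eq', Finset.mem_univ, if_true, Finset.mul_sum]
  simp only [mul_left_comm, mul_comm]

end Matrix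

/-- Let `μ : I → ℝ` be positive, `D = diag(μ)`, `P` row-stochastic, `γ ∈ [0,1]`, `η ∈ ℝ`,
and `M = D((1+η)I − γP)`.  Then every (real) eigenvalue `λ` of the symmetric matrix
`M + Mᵀ` satisfies `λ ≥ min_i [2η μ_i + (2−γ) μ_i − γ Σ_j μ_j P_{j i}]`. -/
theorem stmt_3 {I : Type*} [Fintype I] [Nonempty I] [DecidableEq I]
    (μ : I → ℝ) (hμ : ∀ i, 0 < μ i)
    (P : Matrix I I ℝ) (hP0 : ∀ i j, 0 ≤ P i j) (hP1 : ∀ i, ∑ j, P i j = 1)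
    (γ η : ℝ) (hγ : γ ∈ Set.Icc (0 : ℝ) 1)
    (M : Matrix I I ℝ) (hM : M = diagonal μ * ((1 + η) • (1 : Matrix I I ℝ) - γ • P)) :
    ∀ lam : ℝ, Module.End.HasEigenvalue (Matrix.toLin' (M + Mᵀ)) lam →
      (Finset.univ.inf' Finset.univ_nonempty fun i =>
        2 * η * μ i + (2 - γ) * μ i - γ * ∑ j, μ j * P j i) ≤ lam := by
  intro lam hlam
  have hoff : ∀ i j, i ≠ j → M i j ≤ 0 := fun i j hij => hM ▸
    diagonal_mul_smul_one_sub_smul_apply_nonpos μ P γ η (fun i => (hμ i).le) hP0 hγ.1 hij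
  obtain ⟨k, hk⟩ := exists_sum_row_add_sum_col_le_of_hasEigenvalue_add_transpose hoff hlam
  rw [hM, sum_diagonal_mul_smul_one_sub_smul_row μ P γ η hP1,
    sum_diagonal_mul_smul_one_sub_smul_col] at hk
  refine (Finset.inf'_le _ (Finset.mem_univ k)).trans ?_
  linarith
end

section
/- Let S and A be nonempty finite sets, μ : S×A → ℝ positive, D = diag(μ), P a row-stochastic (S×A)×S real matrix, γ ∈ (0,1), and X a real (S×A)×n matrix with full column rank. For a deterministic policy π : S → A let Π_π be the S×(S×A) matrix with (Π_π)(s,(s′,a′)) = 1 if s′ = s and a′ = π(s), and 0 otherwise. Suppose η > max_{π, (s,a)} [ γ (μᵀ P Π_π)(s,a) / (2 μ(s,a)) ] − (2−γ)/2, where the max is over all deterministic policies π and all (s,a) ∈ S×A. Then for every deterministic policy π the n×n matrix A_π = −(1+η) XᵀDX + γ XᵀD P Π_π X is negative definite: θᵀA_πθ < 0 for all nonzero θ ∈ ℝⁿ. -/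
/-!
With `x = Xθ ≠ 0` and `Q = PΠ_π` row-stochastic, the quadratic form is
`-(1+η) Σ μ x² + γ Σ μ x (Qx)`. AM–GM bounds the cross term by `½ Σ μ (x² + (Qx)²)`, and
Jensen's inequality `(Qx)² ≤ Q(x²)` moves the weight through `Q`:
`Σ μ (Qx)² ≤ Σ (μᵀQ) x²`. The form is therefore at most
`Σ_q ((-(1+η) + γ/2) μ_q + (γ/2)(μᵀQ)_q) x_q²`, and the bound on `η` says precisely that every
coefficient is negative.
-/

open Matrix

namespace Matrix

variable {m k R : Type*} [Fintype m] [Fintype k]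

lemma mul_mem_rowStochastic [DecidableEq m] [CommSemiring R] [PartialOrder R] [IsOrderedRing R]
    {P : Matrix m k R} {Q : Matrix k m R}
    (hP0 : ∀ i j, 0 ≤ P i j) (hP1 : ∀ i, ∑ j, P i j = 1)
    (hQ0 : ∀ i j, 0 ≤ Q i j) (hQ1 : ∀ i, ∑ j, Q i j = 1) :
    P * Q ∈ rowStochastic R m := by
  have hP : P *ᵥ 1 = 1 := funext fun i => by simp [mulVec, dotProduct, hP1]
  have hQ : Q *ᵥ 1 = 1 := funext fun i => by simp [mulVec, dotProduct, hQ1]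
  refine ⟨fun i j => Finset.sum_nonneg fun l _ => mul_nonneg (hP0 i l) (hQ0 l j), ?_⟩
  rw [← mulVec_mulVec, hQ, hP]

lemma mul_mem_rowStochastic_of_selection {S A : Type*} [Fintype S] [Fintype A] [DecidableEq S]
    [DecidableEq A] {P : Matrix (S × A) S ℝ} (hP0 : ∀ p s, 0 ≤ P p s)
    (hP1 : ∀ p, ∑ s, P p s = 1) {Sel : Matrix S (S × A) ℝ} {π : S → A}
    (hSel : ∀ s p, Sel s p = if p.1 = s ∧ p.2 = π s then 1 else 0) :
    P * Sel ∈ rowStochastic ℝ (S × A) := by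
  have hsel : ∀ s p, Sel s p = if p = (s, π s) then 1 else 0 := fun s p => by
    rw [hSel]; simp [Prod.ext_iff]
  refine mul_mem_rowStochastic hP0 hP1 (fun s p => ?_) (fun s => by simp [hsel])
  rw [hsel]; split_ifs <;> norm_num

section CommSemiring

variable [CommSemiring R]

lemma dotProduct_transpose_mul_mul_mulVec (X : Matrix m k R) (B : Matrix m m R) (θ : k → R) :
    θ ⬝ᵥ ((Xᵀ * B * X) *ᵥ θ) = (X *ᵥ θ) ⬝ᵥ (B *ᵥ X *ᵥ θ) := by
  rw [← mulVec_mulVec, ← mulVec_mulVec, dotProduct_mulVec, vecMul_transpose]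

lemma dotProduct_diagonal_mulVec [DecidableEq m] (μ x v : m → R) :
    x ⬝ᵥ (diagonal μ *ᵥ v) = (μ * x) ⬝ᵥ v := by
  simp only [dotProduct, mulVec_diagonal, Pi.mul_apply]
  exact Finset.sum_congr rfl fun i _ => by ring

lemma mul_dotProduct_self (μ x : m → R) : (μ * x) ⬝ᵥ x = μ ⬝ᵥ x ^ 2 :=
  Finset.sum_congr rfl fun i _ => by simp only [Pi.mul_apply, Pi.pow_apply]; ring

lemma dotProduct_smul_add_smul_mulVec [DecidableEq m] (X : Matrix m k R) (μ : m → R)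
    (M : Matrix m m R) (a b : R) (θ : k → R) :
    θ ⬝ᵥ ((a • (Xᵀ * diagonal μ * X) + b • (Xᵀ * (diagonal μ * M) * X)) *ᵥ θ)
      = a * (μ ⬝ᵥ (X *ᵥ θ) ^ 2) + b * ((μ * X *ᵥ θ) ⬝ᵥ (M *ᵥ X *ᵥ θ)) := by
  rw [add_mulVec, smul_mulVec, smul_mulVec, dotProduct_add, dotProduct_smul, dotProduct_smul,
    dotProduct_transpose_mul_mul_mulVec, dotProduct_transpose_mul_mul_mulVec, ← mulVec_mulVec,
    dotProduct_diagonal_mulVec, dotProduct_diagonal_mulVec, mul_dotProduct_self, smul_eq_mul,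
    smul_eq_mul]

end CommSemiring

lemma dotProduct_sq_neg {c : m → ℝ} (hc : ∀ i, c i < 0) {x : m → ℝ} (hx : x ≠ 0) :
    c ⬝ᵥ x ^ 2 < 0 := by
  obtain ⟨i, hi⟩ := Function.ne_iff.mp hx
  have : 0 < (-c) ⬝ᵥ x ^ 2 :=
    Finset.sum_pos' (fun j _ => mul_nonneg (neg_nonneg.2 (hc j).le) (sq_nonneg (x j)))
      ⟨i, Finset.mem_univ i, mul_pos (neg_pos.2 (hc i)) (sq_pos_of_ne_zero hi)⟩
  simpa [neg_dotProduct] using this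

section Real

variable [DecidableEq m] {M : Matrix m m ℝ}

lemma sq_mulVec_le_mulVec_sq (hM : M ∈ rowStochastic ℝ m) (x : m → ℝ) (i : m) :
    (M *ᵥ x) i ^ 2 ≤ (M *ᵥ x ^ 2) i := by
  simpa [mulVec, dotProduct] using
    (even_two.convexOn_pow (𝕜 := ℝ)).map_sum_le (t := Finset.univ) (w := M i) (p := x)
      (fun j _ => hM.1 i j) (sum_row_of_mem_rowStochastic hM i) (fun _ _ => Set.mem_univ _)

lemma dotProduct_mulVec_sq_le (hM : M ∈ rowStochastic ℝ m) {μ : m → ℝ} (hμ : 0 ≤ μ)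
    (x : m → ℝ) : μ ⬝ᵥ (M *ᵥ x) ^ 2 ≤ (μ ᵥ* M) ⬝ᵥ x ^ 2 := by
  rw [← dotProduct_mulVec]
  exact dotProduct_le_dotProduct_of_nonneg_left (sq_mulVec_le_mulVec_sq hM x) hμ

lemma two_mul_dotProduct_mul_mulVec_le (hM : M ∈ rowStochastic ℝ m) {μ : m → ℝ} (hμ : 0 ≤ μ)
    (x : m → ℝ) : 2 * ((μ * x) ⬝ᵥ (M *ᵥ x)) ≤ (μ + μ ᵥ* M) ⬝ᵥ x ^ 2 := by
  have hamgm : 2 * ((μ * x) ⬝ᵥ (M *ᵥ x)) ≤ μ ⬝ᵥ x ^ 2 + μ ⬝ᵥ (M *ᵥ x) ^ 2 := by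
    simp only [dotProduct, Finset.mul_sum, ← Finset.sum_add_distrib, Pi.mul_apply, Pi.pow_apply]
    exact Finset.sum_le_sum fun i _ => by
      nlinarith [mul_nonneg (hμ i) (sq_nonneg (x i - (M *ᵥ x) i))]
  rw [add_dotProduct]
  linarith [dotProduct_mulVec_sq_le hM hμ x]

lemma mul_dotProduct_sq_add_mul_dotProduct_mulVec_neg (hM : M ∈ rowStochastic ℝ m)
    {μ : m → ℝ} (hμ : 0 ≤ μ) {a γ : ℝ} (hγ : 0 ≤ γ)
    (hcoef : ∀ i, (a + γ / 2) * μ i + γ / 2 * (μ ᵥ* M) i < 0) {x : m → ℝ} (hx : x ≠ 0) :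
    a * (μ ⬝ᵥ x ^ 2) + γ * ((μ * x) ⬝ᵥ (M *ᵥ x)) < 0 := by
  have hcross := two_mul_dotProduct_mul_mulVec_le hM hμ x
  calc a * (μ ⬝ᵥ x ^ 2) + γ * ((μ * x) ⬝ᵥ (M *ᵥ x))
      ≤ a * (μ ⬝ᵥ x ^ 2) + γ / 2 * ((μ + μ ᵥ* M) ⬝ᵥ x ^ 2) := by nlinarith
    _ = ((a + γ / 2) • μ + (γ / 2) • (μ ᵥ* M)) ⬝ᵥ x ^ 2 := by
        simp only [add_dotProduct, smul_dotProduct, smul_eq_mul]; ring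
    _ < 0 := dotProduct_sq_neg (fun i => by simpa using hcoef i) hx

end Real

end Matrix

/-- With `D = diag(μ)` for a positive weight `μ` on state–action pairs, `P` a row-stochastic
transition matrix, `X` a feature matrix with full column rank, and action-selection
matrices `Π_π` for deterministic policies `π`, if
`η > max_{π,(s,a)} [γ (μᵀPΠ_π)(s,a) / (2μ(s,a))] − (2−γ)/2` then for every deterministic
policy `π` the matrix `A_π = −(1+η)XᵀDX + γXᵀDPΠ_πX` is negative definite. -/
theorem stmt_4 {S A : Type*} [Fintype S] [Fintype A] [Nonempty S] [Nonempty A]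
    [DecidableEq S] [DecidableEq A] {n : ℕ}
    (μ : S × A → ℝ) (hμ : ∀ p, 0 < μ p)
    (P : Matrix (S × A) S ℝ) (hP0 : ∀ p s, 0 ≤ P p s) (hP1 : ∀ p, ∑ s, P p s = 1)
    (γ : ℝ) (hγ : γ ∈ Set.Ioo (0 : ℝ) 1)
    (X : Matrix (S × A) (Fin n) ℝ) (hX : Function.Injective X.mulVec)
    (Pi : (S → A) → Matrix S (S × A) ℝ)
    (hPi : ∀ (π : S → A) (s : S) (p : S × A),
      Pi π s p = if p.1 = s ∧ p.2 = π s then 1 else 0)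
    (η : ℝ)
    (hη : η > (Finset.univ.sup' Finset.univ_nonempty
        fun q : (S → A) × (S × A) =>
          γ * (μ ᵥ* (P * Pi q.1)) q.2 / (2 * μ q.2)) - (2 - γ) / 2) :
    ∀ (π : S → A) (θ : Fin n → ℝ), θ ≠ 0 →
      θ ⬝ᵥ ((-(1 + η) • (Xᵀ * diagonal μ * X) +
        γ • (Xᵀ * diagonal μ * P * Pi π * X)) *ᵥ θ) < 0 := by
  intro π θ hθ
  have hQ : P * Pi π ∈ rowStochastic ℝ (S × A) :=
    mul_mem_rowStochastic_of_selection hP0 hP1 (hPi π)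
  have hcoef : ∀ q, (-(1 + η) + γ / 2) * μ q + γ / 2 * (μ ᵥ* (P * Pi π)) q < 0 := by
    intro q
    have hq : γ * (μ ᵥ* (P * Pi π)) q / (2 * μ q) < η + (2 - γ) / 2 :=
      (Finset.le_sup' (fun q : (S → A) × (S × A) => γ * (μ ᵥ* (P * Pi q.1)) q.2 / (2 * μ q.2))
        (Finset.mem_univ (π, q))).trans_lt (by linarith)
    rw [div_lt_iff₀ (by linarith [hμ q])] at hq
    linarith
  have hassoc : Xᵀ * diagonal μ * P * Pi π * X = Xᵀ * (diagonal μ * (P * Pi π)) * X := by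
    simp only [Matrix.mul_assoc]
  rw [hassoc, dotProduct_smul_add_smul_mulVec]
  exact mul_dotProduct_sq_add_mul_dotProduct_mulVec_neg hQ (fun q => (hμ q).le) hγ.1.le hcoef
    (by simpa using hX.ne hθ)
end

section
/- Let S and A be nonempty finite sets, μ : S×A → ℝ with 0 < μ(s,a) ≤ 1 for all (s,a), D = diag(μ), P a row-stochastic (S×A)×S real matrix, R : S×A → ℝ, γ ∈ (0,1), and X a real (S×A)×n matrix such that XᵀDX is invertible. Define B : ℝ^{S×A} → ℝ^{S} by (Bq)(s) = max_{a∈A} q(s,a), and define T_η(θ) = (1/(1+η)) (XᵀDX)^{-1} ( XᵀDR + γ XᵀD P B(Xθ) ). If ‖(XᵀDX)^{-1}‖_∞ · ‖Xᵀ‖_∞ · ‖X‖_∞ ≤ 1 + η, then T_η is a γ-contraction in the supremum norm: ‖T_η(θ₁) − T_η(θ₂)‖_∞ ≤ γ ‖θ₁ − θ₂‖_∞ for all θ₁, θ₂ ∈ ℝⁿ. -/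
/-!
The data term `XᵀDR` cancels, so `T_η θ₁ - T_η θ₂ = γ/(1+η) · (XᵀDX)⁻¹ XᵀDP (B(Xθ₁) - B(Xθ₂))`.
A pointwise maximum is 1-Lipschitz for the sup norm, and `D` (entries in `(0, 1]`) and the
row-stochastic `P` have `∞`-operator norm at most one. Submultiplicativity of the `∞`-operator
norm then bounds the difference by `γ/(1+η) · ‖(XᵀDX)⁻¹‖ ‖Xᵀ‖ ‖X‖ ‖θ₁ - θ₂‖ ≤ γ ‖θ₁ - θ₂‖`.
-/

open Matrix

attribute [local instance] Matrix.linftyOpNormedAddCommGroup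

/-- The greedy-max operator `(Bq)(s) = max_{a ∈ A} q(s,a)`. -/
noncomputable def greedyMax {S A : Type*} [Fintype A] [Nonempty A]
    (q : S × A → ℝ) : S → ℝ :=
  fun s => Finset.univ.sup' Finset.univ_nonempty fun a => q (s, a)

/-- The regularized projected Bellman operator
`T_η(θ) = (1/(1+η)) (XᵀDX)⁻¹ (XᵀDR + γ XᵀD P B(Xθ))`. -/
noncomputable def Treg {S A : Type*} [Fintype S] [Fintype A] [Nonempty A]
    [DecidableEq S] [DecidableEq A] {n : ℕ}
    (μ : S × A → ℝ) (P : Matrix (S × A) S ℝ) (R : S × A → ℝ) (γ η : ℝ)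
    (X : Matrix (S × A) (Fin n) ℝ) (θ : Fin n → ℝ) : Fin n → ℝ :=
  (1 / (1 + η)) •
    ((Xᵀ * diagonal μ * X)⁻¹ *ᵥ
      ((Xᵀ * diagonal μ) *ᵥ R + γ • ((Xᵀ * diagonal μ * P) *ᵥ greedyMax (X *ᵥ θ))))

section greedyMax

variable {S A : Type*} [Fintype S] [Fintype A] [Nonempty A]

lemma greedyMax_sub_le_norm (q₁ q₂ : S × A → ℝ) (s : S) :
    greedyMax q₁ s - greedyMax q₂ s ≤ ‖q₁ - q₂‖ := by
  rw [sub_le_iff_le_add]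
  refine Finset.sup'_le _ _ fun a _ => ?_
  have hq : q₁ (s, a) - q₂ (s, a) ≤ ‖q₁ - q₂‖ :=
    (le_abs_self _).trans (norm_le_pi_norm (q₁ - q₂) (s, a))
  have hmax : q₂ (s, a) ≤ greedyMax q₂ s := Finset.le_sup' (fun a => q₂ (s, a)) (Finset.mem_univ a)
  linarith

lemma norm_greedyMax_sub_le (q₁ q₂ : S × A → ℝ) :
    ‖greedyMax q₁ - greedyMax q₂‖ ≤ ‖q₁ - q₂‖ := by
  refine (pi_norm_le_iff_of_nonneg (norm_nonneg _)).2 fun s => abs_sub_le_iff.2 ⟨?_, ?_⟩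
  · exact greedyMax_sub_le_norm q₁ q₂ s
  · exact norm_sub_rev q₁ q₂ ▸ greedyMax_sub_le_norm q₂ q₁ s

end greedyMax

lemma Matrix.linfty_opNorm_le_one_of_stochastic {m n : Type*} [Fintype m] [Fintype n]
    (P : Matrix m n ℝ) (hP0 : ∀ i j, 0 ≤ P i j) (hP1 : ∀ i, ∑ j, P i j = 1) : ‖P‖ ≤ 1 := by
  rw [← coe_nnnorm, NNReal.coe_le_one, linfty_opNNNorm_def]
  refine Finset.sup_le fun i _ => ?_
  rw [← NNReal.coe_le_coe]
  push_cast
  simp only [Real.norm_of_nonneg (hP0 i _), hP1 i, le_refl]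

lemma Matrix.linfty_opNorm_diagonal_le_one {m : Type*} [Fintype m] [DecidableEq m]
    (μ : m → ℝ) (hμ : ∀ i, |μ i| ≤ 1) : ‖diagonal μ‖ ≤ 1 := by
  rw [linfty_opNorm_diagonal]
  exact (pi_norm_le_iff_of_nonneg zero_le_one).2 hμ

lemma Matrix.linfty_opNorm_mul_diagonal_mul_le {l m n : Type*} [Fintype l] [Fintype m]
    [Fintype n] [DecidableEq m] (M : Matrix l m ℝ) (μ : m → ℝ) (hμ : ∀ i, |μ i| ≤ 1)
    (P : Matrix m n ℝ) (hP0 : ∀ i j, 0 ≤ P i j) (hP1 : ∀ i, ∑ j, P i j = 1) :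
    ‖M * diagonal μ * P‖ ≤ ‖M‖ := calc
  ‖M * diagonal μ * P‖ ≤ ‖M‖ * ‖diagonal μ‖ * ‖P‖ :=
    (linfty_opNorm_mul _ _).trans <| by gcongr; exact linfty_opNorm_mul _ _
  _ ≤ ‖M‖ * 1 * 1 := by
    gcongr
    · exact linfty_opNorm_diagonal_le_one μ hμ
    · exact linfty_opNorm_le_one_of_stochastic P hP0 hP1
  _ = ‖M‖ := by ring

lemma Treg_sub {S A : Type*} [Fintype S] [Fintype A] [Nonempty A]
    [DecidableEq S] [DecidableEq A] {n : ℕ}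
    (μ : S × A → ℝ) (P : Matrix (S × A) S ℝ) (R : S × A → ℝ) (γ η : ℝ)
    (X : Matrix (S × A) (Fin n) ℝ) (θ₁ θ₂ : Fin n → ℝ) :
    Treg μ P R γ η X θ₁ - Treg μ P R γ η X θ₂ =
      ((1 + η)⁻¹ * γ) • (((Xᵀ * diagonal μ * X)⁻¹ * (Xᵀ * diagonal μ * P)) *ᵥ
        (greedyMax (X *ᵥ θ₁) - greedyMax (X *ᵥ θ₂))) := by
  simp only [Treg, ← smul_sub, ← mulVec_sub, ← mulVec_mulVec, mulVec_smul, add_sub_add_left_eq_sub,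
    mul_smul, one_div]

theorem stmt_5_general {S A : Type*} [Fintype S] [Fintype A] [Nonempty A]
    [DecidableEq S] [DecidableEq A] {n : ℕ}
    (μ : S × A → ℝ) (hμ : ∀ p, 0 < μ p ∧ μ p ≤ 1)
    (P : Matrix (S × A) S ℝ) (hP0 : ∀ p s, 0 ≤ P p s) (hP1 : ∀ p, ∑ s, P p s = 1)
    (R : S × A → ℝ) (γ : ℝ) (hγ : γ ∈ Set.Ioo (0 : ℝ) 1)
    (X : Matrix (S × A) (Fin n) ℝ)
    (η : ℝ)
    (hnorm : ‖(Xᵀ * diagonal μ * X)⁻¹‖ * ‖Xᵀ‖ * ‖X‖ ≤ 1 + η) :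
    ∀ θ₁ θ₂ : Fin n → ℝ,
      ‖Treg μ P R γ η X θ₁ - Treg μ P R γ η X θ₂‖ ≤ γ * ‖θ₁ - θ₂‖ := by
  intro θ₁ θ₂
  set K := (Xᵀ * diagonal μ * X)⁻¹
  -- If `1 + η = 0`, the junk value `0⁻¹ = 0` makes `Treg` constant and the bound is trivial.
  have h1η : 0 ≤ 1 + η := (by positivity : 0 ≤ ‖K‖ * ‖Xᵀ‖ * ‖X‖).trans hnorm
  have hc : 0 ≤ (1 + η)⁻¹ * γ := mul_nonneg (inv_nonneg.2 h1η) hγ.1.le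
  have hXDP : ‖Xᵀ * diagonal μ * P‖ ≤ ‖Xᵀ‖ :=
    linfty_opNorm_mul_diagonal_mul_le _ μ (fun p => (abs_of_pos (hμ p).1).trans_le (hμ p).2)
      P hP0 hP1
  have hB : ‖greedyMax (X *ᵥ θ₁) - greedyMax (X *ᵥ θ₂)‖ ≤ ‖X‖ * ‖θ₁ - θ₂‖ := by
    refine (norm_greedyMax_sub_le _ _).trans ?_
    rw [← mulVec_sub]
    exact linfty_opNorm_mulVec _ _
  have hγθ : 0 ≤ γ * ‖θ₁ - θ₂‖ := mul_nonneg hγ.1.le (norm_nonneg _)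
  rw [Treg_sub, norm_smul, Real.norm_of_nonneg hc]
  calc (1 + η)⁻¹ * γ * ‖(K * (Xᵀ * diagonal μ * P)) *ᵥ
          (greedyMax (X *ᵥ θ₁) - greedyMax (X *ᵥ θ₂))‖
      ≤ (1 + η)⁻¹ * γ * (‖K‖ * ‖Xᵀ‖ * ‖X‖ * ‖θ₁ - θ₂‖) := by
        refine mul_le_mul_of_nonneg_left ((linfty_opNorm_mulVec _ _).trans ?_) hc
        rw [mul_assoc _ ‖X‖]
        gcongr
        exact (linfty_opNorm_mul _ _).trans (by gcongr)
    _ ≤ (1 + η)⁻¹ * (1 + η) * (γ * ‖θ₁ - θ₂‖) := by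
        rw [mul_mul_mul_comm]; gcongr
    _ ≤ γ * ‖θ₁ - θ₂‖ := mul_le_of_le_one_left hγθ (inv_mul_le_one_of_le₀ le_rfl h1η)

/-- If `‖(XᵀDX)⁻¹‖_∞ ‖Xᵀ‖_∞ ‖X‖_∞ ≤ 1 + η`, the regularized projected Bellman operator
`T_η` is a `γ`-contraction in the supremum norm. -/
theorem stmt_5 {S A : Type*} [Fintype S] [Fintype A] [Nonempty S] [Nonempty A]
    [DecidableEq S] [DecidableEq A] {n : ℕ}
    (μ : S × A → ℝ) (hμ : ∀ p, 0 < μ p ∧ μ p ≤ 1)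
    (P : Matrix (S × A) S ℝ) (hP0 : ∀ p s, 0 ≤ P p s) (hP1 : ∀ p, ∑ s, P p s = 1)
    (R : S × A → ℝ) (γ : ℝ) (hγ : γ ∈ Set.Ioo (0 : ℝ) 1)
    (X : Matrix (S × A) (Fin n) ℝ) (hX : IsUnit (Xᵀ * diagonal μ * X).det)
    (η : ℝ) (hη : 0 ≤ η)
    (hnorm : ‖(Xᵀ * diagonal μ * X)⁻¹‖ * ‖Xᵀ‖ * ‖X‖ ≤ 1 + η) :
    ∀ θ₁ θ₂ : Fin n → ℝ,
      ‖Treg μ P R γ η X θ₁ - Treg μ P R γ η X θ₂‖ ≤ γ * ‖θ₁ - θ₂‖ :=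
  stmt_5_general μ hμ P hP0 hP1 R γ hγ X η hnorm
end

section
/- Let n ≥ 1 and equip ℝⁿ with the supremum norm ‖·‖_∞. Let T : ℝⁿ → ℝⁿ be γ-Lipschitz with γ ∈ (0,1), let Q* ∈ ℝⁿ satisfy T(Q*) = Q* and ‖Q*‖_∞ ≤ R_max/(1−γ) for some R_max ≥ 0, let Γ : ℝⁿ → ℝⁿ be a linear map with operator norm ‖Γ‖_∞ (with respect to ‖·‖_∞), and let η ≥ 0 satisfy 1 + η > γ‖Γ‖_∞. If q_e ∈ ℝⁿ satisfies (1+η) q_e = Γ(T(q_e)), then ‖q_e − Q*‖_∞ ≤ ‖Q* − Γ(Q*)‖_∞ / (1 + η − γ‖Γ‖_∞) + (η / (1 + η − γ‖Γ‖_∞)) · R_max/(1−γ). -/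
/-! Rewrite `(1+η)(q_e − Q*) = (ΓT q_e − ΓT Q*) + (ΓQ* − Q*) − ηQ*`, using `T Q* = Q*`.
Since `ΓT` is `γ‖Γ‖`-Lipschitz, taking norms gives
`(1 + η − γ‖Γ‖)‖q_e − Q*‖ ≤ ‖Q* − ΓQ*‖ + η‖Q*‖`; divide by the positive factor and bound `‖Q*‖`. -/

theorem LipschitzWith.mul_norm_sub_le_of_smul_eq {E : Type*} [NormedAddCommGroup E]
    [NormedSpace ℝ E] {F : E → E} {L : NNReal} (hF : LipschitzWith L F) {η : ℝ} (hη : 0 ≤ η)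
    {q : E} (hq : (1 + η) • q = F q) (Q : E) :
    (1 + η - L) * ‖q - Q‖ ≤ ‖Q - F Q‖ + η * ‖Q‖ := by
  have hsplit : (1 + η) • (q - Q) = (F q - F Q) + (F Q - Q) - η • Q := by
    rw [smul_sub, hq]
    module
  have hnorm : (1 + η) * ‖q - Q‖ ≤ L * ‖q - Q‖ + ‖Q - F Q‖ + η * ‖Q‖ :=
    calc (1 + η) * ‖q - Q‖ = ‖(F q - F Q) + (F Q - Q) - η • Q‖ := by
          rw [← hsplit, norm_smul, Real.norm_of_nonneg (by linarith)]
      _ ≤ ‖F q - F Q‖ + ‖F Q - Q‖ + ‖η • Q‖ :=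
          (_root_.norm_sub_le _ _).trans (by gcongr; exact norm_add_le _ _)
      _ ≤ L * ‖q - Q‖ + ‖Q - F Q‖ + η * ‖Q‖ := by
          rw [norm_sub_rev (F Q), norm_smul, Real.norm_of_nonneg hη]
          gcongr
          exact hF.norm_sub_le q Q
  linarith

theorem stmt_7_general {n : ℕ}
    (T : (Fin n → ℝ) → (Fin n → ℝ)) (γ : ℝ) (hγ : γ ∈ Set.Ioo (0 : ℝ) 1)
    (hT : LipschitzWith (Real.toNNReal γ) T)
    (Qstar : Fin n → ℝ) (hfix : T Qstar = Qstar)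
    (Rmax : ℝ) (hQ : ‖Qstar‖ ≤ Rmax / (1 - γ))
    (Γ : (Fin n → ℝ) →L[ℝ] (Fin n → ℝ))
    (η : ℝ) (hη : 0 ≤ η) (hden : γ * ‖Γ‖ < 1 + η)
    (qe : Fin n → ℝ) (he : (1 + η) • qe = Γ (T qe)) :
    ‖qe - Qstar‖ ≤ ‖Qstar - Γ Qstar‖ / (1 + η - γ * ‖Γ‖) +
      (η / (1 + η - γ * ‖Γ‖)) * (Rmax / (1 - γ)) := by
  have hΓT : LipschitzWith (‖Γ‖₊ * γ.toNNReal) (Γ ∘ T) := Γ.lipschitz.comp hT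
  have hL : ((‖Γ‖₊ * γ.toNNReal : NNReal) : ℝ) = γ * ‖Γ‖ := by
    rw [NNReal.coe_mul, coe_nnnorm, Real.coe_toNNReal _ hγ.1.le, mul_comm]
  have hbound := hΓT.mul_norm_sub_le_of_smul_eq hη he Qstar
  rw [hL, Function.comp_apply, hfix] at hbound
  rw [div_mul_eq_mul_div, ← add_div, le_div_iff₀ (by linarith), mul_comm]
  linarith [mul_le_mul_of_nonneg_left hQ hη]

/-- Error bound for the regularized projected fixed point.  With `ℝⁿ` carrying the
supremum norm: if `T` is a `γ`-contraction with fixed point `Q*` satisfying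
`‖Q*‖_∞ ≤ R_max/(1−γ)`, `Γ` is a linear map with operator norm `‖Γ‖_∞`,
`1 + η > γ‖Γ‖_∞`, and `(1+η) q_e = Γ(T(q_e))`, then
`‖q_e − Q*‖_∞ ≤ ‖Q* − ΓQ*‖_∞/(1+η−γ‖Γ‖) + (η/(1+η−γ‖Γ‖)) R_max/(1−γ)`. -/
theorem stmt_7 {n : ℕ} (hn : 1 ≤ n)
    (T : (Fin n → ℝ) → (Fin n → ℝ)) (γ : ℝ) (hγ : γ ∈ Set.Ioo (0 : ℝ) 1)
    (hT : LipschitzWith (Real.toNNReal γ) T)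
    (Qstar : Fin n → ℝ) (hfix : T Qstar = Qstar)
    (Rmax : ℝ) (hR : 0 ≤ Rmax) (hQ : ‖Qstar‖ ≤ Rmax / (1 - γ))
    (Γ : (Fin n → ℝ) →L[ℝ] (Fin n → ℝ))
    (η : ℝ) (hη : 0 ≤ η) (hden : γ * ‖Γ‖ < 1 + η)
    (qe : Fin n → ℝ) (he : (1 + η) • qe = Γ (T qe)) :
    ‖qe - Qstar‖ ≤ ‖Qstar - Γ Qstar‖ / (1 + η - γ * ‖Γ‖) +
      (η / (1 + η - γ * ‖Γ‖)) * (Rmax / (1 - γ)) :=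
  stmt_7_general T γ hγ hT Qstar hfix Rmax hQ Γ η hη hden qe he
end

section
/- Let S and A be nonempty finite sets, μ : S×A → ℝ positive, D = diag(μ), P a row-stochastic (S×A)×S real matrix, γ ∈ (0,1), η ≥ 0, and X a real (S×A)×n matrix with full column rank. Define B : ℝ^{S×A} → ℝ^{S} by (Bq)(s) = max_{a∈A} q(s,a) and the limiting vector field f_∞(θ) = −(1+η) XᵀDX θ + γ XᵀD P B(Xθ). Suppose η > max_{π,(s,a)} [ γ (μᵀ P Π_π)(s,a) / (2 μ(s,a)) ] − (2−γ)/2, where the max is over all deterministic policies π : S → A and all (s,a) ∈ S×A, and Π_π is the 0/1 action-selection matrix of π. Then θᵀ f_∞(θ) < 0 for every nonzero θ ∈ ℝⁿ, and every differentiable θ : [0,∞) → ℝⁿ with θ′(t) = f_∞(θ(t)) for all t ≥ 0 satisfies θ(t) → 0 as t → ∞ (the origin of the limiting ODE is globally asymptotically stable). -/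
/-! Lyapunov function `‖θ‖²`. Put `v = Xθ` and let `π` be greedy for `v`, so that
`θᵀ f_∞(θ) = -(1+η) ‖v‖²_D + γ vᵀ D P Π_π v`. Young's inequality and the stochasticity of `P`
bound the cross term by `(‖v‖²_D + Σ_s (μᵀP)(s) v(s,π s)²) / 2`, and since
`(μᵀ P Π_π)(s, π s) = (μᵀP)(s)`, the maximum `M` in the hypothesis on `η` gives
`γ (μᵀP)(s) ≤ 2M μ(s, π s)`. Hence `θᵀ f_∞(θ) ≤ -(1 + η - γ/2 - M) ‖Xθ‖²_D`, which is negative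
definite because `X` is injective, and `‖θ(t)‖²` decays exponentially along every trajectory. -/

open Matrix

/-- The limiting vector field `f_∞(θ) = −(1+η) XᵀDX θ + γ XᵀD P B(Xθ)`. -/
noncomputable def limitField {S A : Type*} [Fintype S] [Fintype A] [Nonempty A]
    [DecidableEq S] [DecidableEq A] {n : ℕ}
    (μ : S × A → ℝ) (P : Matrix (S × A) S ℝ) (γ η : ℝ)
    (X : Matrix (S × A) (Fin n) ℝ) (θ : Fin n → ℝ) : Fin n → ℝ :=
  -((1 + η) • ((Xᵀ * diagonal μ * X) *ᵥ θ)) +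
    γ • ((Xᵀ * diagonal μ * P) *ᵥ greedyMax (X *ᵥ θ))

open Filter Topology

/-- `‖v‖²_D = vᵀ diag(μ) v`. -/
def weightedNormSq {ι : Type*} [Fintype ι] (μ v : ι → ℝ) : ℝ :=
  ∑ i, μ i * v i ^ 2

section WeightedNormSq

variable {ι : Type*} [Fintype ι]

lemma weightedNormSq_smul (μ v : ι → ℝ) (t : ℝ) :
    weightedNormSq μ (t • v) = t ^ 2 * weightedNormSq μ v := by
  simp only [weightedNormSq, Pi.smul_apply, smul_eq_mul, Finset.mul_sum]
  exact Finset.sum_congr rfl fun i _ => by ring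

lemma weightedNormSq_pos {μ v : ι → ℝ} (hμ : ∀ i, 0 < μ i) (hv : v ≠ 0) :
    0 < weightedNormSq μ v := by
  obtain ⟨i, hi⟩ := Function.ne_iff.mp hv
  exact Finset.sum_pos' (fun j _ => mul_nonneg (hμ j).le (sq_nonneg _))
    ⟨i, Finset.mem_univ i, mul_pos (hμ i) (sq_pos_of_ne_zero hi)⟩

lemma continuous_weightedNormSq (μ : ι → ℝ) : Continuous (weightedNormSq μ) := by
  unfold weightedNormSq
  fun_prop

end WeightedNormSq

lemma exists_pos_mul_norm_sq_le {E : Type*} [NormedAddCommGroup E] [NormedSpace ℝ E]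
    [FiniteDimensional ℝ E] {q : E → ℝ} (hq : Continuous q)
    (hsmul : ∀ (t : ℝ) x, q (t • x) = t ^ 2 * q x) (hpos : ∀ x, x ≠ 0 → 0 < q x) :
    ∃ c > 0, ∀ x, c * ‖x‖ ^ 2 ≤ q x := by
  have hq0 : q 0 = 0 := by simpa using hsmul 0 0
  rcases subsingleton_or_nontrivial E with hE | hE
  · exact ⟨1, one_pos, fun x => by simp [Subsingleton.elim x 0, hq0]⟩
  obtain ⟨u, hu, hmin⟩ := (isCompact_sphere (0 : E) 1).exists_isMinOn
    (NormedSpace.sphere_nonempty.mpr zero_le_one) hq.continuousOn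
  have hu1 : ‖u‖ = 1 := by simpa using hu
  refine ⟨q u, hpos u (norm_ne_zero_iff.mp (by simp [hu1])), fun x => ?_⟩
  rcases eq_or_ne x 0 with rfl | hx
  · simp [hq0]
  have hx' : ‖x‖ ≠ 0 := norm_ne_zero_iff.mpr hx
  have hsphere : ‖x‖⁻¹ • x ∈ Metric.sphere (0 : E) 1 := by
    simp [norm_smul, hx']
  calc q u * ‖x‖ ^ 2 ≤ q (‖x‖⁻¹ • x) * ‖x‖ ^ 2 := by gcongr; exact hmin hsphere
    _ = q x := by rw [hsmul]; field_simp

lemma exists_pos_mul_dotProduct_self_le {ι κ : Type*} [Fintype ι] [Fintype κ]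
    {μ : ι → ℝ} (hμ : ∀ i, 0 < μ i) (X : Matrix ι κ ℝ) (hX : Function.Injective X.mulVec) :
    ∃ c > 0, ∀ θ, c * (θ ⬝ᵥ θ) ≤ weightedNormSq μ (X *ᵥ θ) := by
  obtain ⟨c, hc, hle⟩ := exists_pos_mul_norm_sq_le (E := EuclideanSpace ℝ κ)
    (q := fun x => weightedNormSq μ (X *ᵥ x.ofLp))
    ((continuous_weightedNormSq μ).comp (by fun_prop))
    (fun t x => by simp [mulVec_smul, weightedNormSq_smul])
    (fun x hx => weightedNormSq_pos hμ ((hX.ne_iff' (mulVec_zero X)).mpr (by simpa using hx)))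
  refine ⟨c, hc, fun θ => ?_⟩
  have := hle (WithLp.toLp 2 θ)
  rw [EuclideanSpace.real_norm_sq_eq] at this
  simpa [dotProduct, sq] using this

lemma sum_mul_mulVec_le_of_stochastic {ι κ : Type*} [Fintype ι] [Fintype κ]
    {μ : ι → ℝ} (hμ : ∀ i, 0 ≤ μ i) {P : Matrix ι κ ℝ} (hP0 : ∀ i j, 0 ≤ P i j)
    (hP1 : ∀ i, ∑ j, P i j = 1) (u : ι → ℝ) (w : κ → ℝ) :
    ∑ i, μ i * u i * (P *ᵥ w) i ≤ (weightedNormSq μ u + weightedNormSq (μ ᵥ* P) w) / 2 := by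
  have hu : ∑ i, ∑ j, μ i * P i j * u i ^ 2 = weightedNormSq μ u :=
    Finset.sum_congr rfl fun i _ => by rw [← Finset.sum_mul, ← Finset.mul_sum, hP1, mul_one]
  have hw : ∑ i, ∑ j, μ i * P i j * w j ^ 2 = weightedNormSq (μ ᵥ* P) w := by
    rw [Finset.sum_comm]
    simp only [weightedNormSq, vecMul, dotProduct, Finset.sum_mul]
  calc ∑ i, μ i * u i * (P *ᵥ w) i = ∑ i, ∑ j, μ i * P i j * (u i * w j) := by
        simp only [mulVec, dotProduct, Finset.mul_sum]
        exact Finset.sum_congr rfl fun i _ => Finset.sum_congr rfl fun j _ => by ring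
    _ ≤ ∑ i, ∑ j, μ i * P i j * ((u i ^ 2 + w j ^ 2) / 2) := by
        gcongr with i _ j _
        · exact mul_nonneg (hμ i) (hP0 i j)
        · nlinarith [sq_nonneg (u i - w j)]
    _ = ((∑ i, ∑ j, μ i * P i j * u i ^ 2) + ∑ i, ∑ j, μ i * P i j * w j ^ 2) / 2 := by
        simp only [mul_add, add_div, Finset.sum_add_distrib, Finset.sum_div, mul_div_assoc]
    _ = (weightedNormSq μ u + weightedNormSq (μ ᵥ* P) w) / 2 := by
        rw [hu, hw]

lemma weightedNormSq_graph_le {S A : Type*} [Fintype S] [Fintype A]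
    {μ : S × A → ℝ} (hμ : ∀ p, 0 ≤ μ p) {c : S → ℝ} {π : S → A} {κ : ℝ} (hκ : 0 ≤ κ)
    (hc : ∀ s, c s ≤ κ * μ (s, π s)) (v : S × A → ℝ) :
    weightedNormSq c (fun s => v (s, π s)) ≤ κ * weightedNormSq μ v := by
  calc weightedNormSq c (fun s => v (s, π s))
      ≤ ∑ s, κ * (μ (s, π s) * v (s, π s) ^ 2) := by
        refine Finset.sum_le_sum fun s _ => ?_
        rw [← mul_assoc]
        exact mul_le_mul_of_nonneg_right (hc s) (sq_nonneg _)
    _ ≤ ∑ s, ∑ a, κ * (μ (s, a) * v (s, a) ^ 2) :=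
        Finset.sum_le_sum fun s _ => Finset.single_le_sum
          (f := fun a => κ * (μ (s, a) * v (s, a) ^ 2))
          (fun a _ => mul_nonneg hκ (mul_nonneg (hμ _) (sq_nonneg _))) (Finset.mem_univ _)
    _ = κ * weightedNormSq μ v := by
        rw [weightedNormSq, Finset.mul_sum, Fintype.sum_prod_type]

/-- The action-selection matrix `Π_π`. -/
def policyMatrix {S A : Type*} [DecidableEq S] [DecidableEq A] (π : S → A) :
    Matrix S (S × A) ℝ :=
  fun s p => if p.1 = s ∧ p.2 = π s then 1 else 0

lemma vecMul_policyMatrix_apply {S A : Type*} [Fintype S] [DecidableEq S] [DecidableEq A]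
    (π : S → A) (x : S → ℝ) (s : S) : (x ᵥ* policyMatrix π) (s, π s) = x s := by
  simp only [vecMul, dotProduct, policyMatrix, mul_ite, mul_one, mul_zero]
  rw [Finset.sum_eq_single s] <;> grind

lemma vecMul_mul_policyMatrix_apply {ι S A : Type*} [Fintype ι] [Fintype S] [DecidableEq S]
    [DecidableEq A] (x : ι → ℝ) (P : Matrix ι S ℝ) (π : S → A) (s : S) :
    (x ᵥ* (P * policyMatrix π)) (s, π s) = (x ᵥ* P) s := by
  rw [← vecMul_vecMul, vecMul_policyMatrix_apply]

lemma exists_greedyMax_eq {S A : Type*} [Fintype A] [Nonempty A] (v : S × A → ℝ) :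
    ∃ π : S → A, greedyMax v = fun s => v (s, π s) := by
  choose π _ hπ using fun s => Finset.exists_mem_eq_sup' Finset.univ_nonempty fun a => v (s, a)
  exact ⟨π, funext hπ⟩

lemma dotProduct_transpose_mul_diagonal_mul_mulVec {R ι κ m : Type*} [CommSemiring R]
    [Fintype ι] [Fintype κ] [Fintype m] [DecidableEq ι] (X : Matrix ι κ R) (μ : ι → R)
    (Y : Matrix ι m R) (θ : κ → R) (w : m → R) :
    θ ⬝ᵥ (Xᵀ * diagonal μ * Y) *ᵥ w = ∑ i, μ i * (X *ᵥ θ) i * (Y *ᵥ w) i := by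
  rw [Matrix.mul_assoc, ← mulVec_mulVec, dotProduct_mulVec, vecMul_transpose,
    ← mulVec_mulVec]
  simp only [dotProduct, mulVec_diagonal]
  exact Finset.sum_congr rfl fun i _ => by ring

theorem dotProduct_limitField_le {S A : Type*} [Fintype S] [Fintype A] [Nonempty S]
    [Nonempty A] [DecidableEq S] [DecidableEq A] {n : ℕ} {μ : S × A → ℝ} (hμ : ∀ p, 0 < μ p)
    {P : Matrix (S × A) S ℝ} (hP0 : ∀ p s, 0 ≤ P p s) (hP1 : ∀ p, ∑ s, P p s = 1)
    {γ : ℝ} (hγ : 0 ≤ γ) {M : ℝ}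
    (hM : ∀ (π : S → A) p, γ * (μ ᵥ* (P * policyMatrix π)) p / (2 * μ p) ≤ M)
    (η : ℝ) (X : Matrix (S × A) (Fin n) ℝ) (θ : Fin n → ℝ) :
    θ ⬝ᵥ limitField μ P γ η X θ ≤ (M + γ / 2 - 1 - η) * weightedNormSq μ (X *ᵥ θ) := by
  set v := X *ᵥ θ
  obtain ⟨π, hπ⟩ := exists_greedyMax_eq v
  have hfield : θ ⬝ᵥ limitField μ P γ η X θ =
      -((1 + η) * weightedNormSq μ v) + γ * ∑ p, μ p * v p * (P *ᵥ greedyMax v) p := by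
    simp only [limitField, dotProduct_add, dotProduct_neg, dotProduct_smul, smul_eq_mul,
      dotProduct_transpose_mul_diagonal_mul_mulVec, weightedNormSq]
    simp only [mul_assoc, ← sq]
    rfl
  have hcoef : ∀ s, γ * (μ ᵥ* P) s ≤ 2 * M * μ (s, π s) := by
    intro s
    have h := hM π (s, π s)
    rw [vecMul_mul_policyMatrix_apply, div_le_iff₀ (by linarith [hμ (s, π s)])] at h
    linarith
  have hM0 : 0 ≤ M := by
    obtain ⟨s⟩ := ‹Nonempty S›
    have hμP : 0 ≤ (μ ᵥ* P) s :=
      Finset.sum_nonneg fun p _ => mul_nonneg (hμ p).le (hP0 p s)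
    nlinarith [hcoef s, hμ (s, π s), mul_nonneg hγ hμP]
  have hgreedy : γ * weightedNormSq (μ ᵥ* P) (greedyMax v) ≤ 2 * M * weightedNormSq μ v := by
    have h := weightedNormSq_graph_le (fun p => (hμ p).le) (by positivity) hcoef v
    rw [hπ]
    simpa only [weightedNormSq, Finset.mul_sum, mul_assoc] using h
  have hcross := sum_mul_mulVec_le_of_stochastic (fun p => (hμ p).le) hP0 hP1 v (greedyMax v)
  rw [hfield]
  nlinarith [mul_le_mul_of_nonneg_left hcross hγ]

lemma HasDerivAt.dotProduct_self {ι : Type*} [Fintype ι] {θ : ℝ → ι → ℝ} {θ' : ι → ℝ}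
    {t : ℝ} (h : HasDerivAt θ θ' t) :
    HasDerivAt (fun s => θ s ⬝ᵥ θ s) (2 * (θ t ⬝ᵥ θ')) t := by
  have hsum : HasDerivAt (fun s => θ s ⬝ᵥ θ s) (∑ i, (θ' i * θ t i + θ t i * θ' i)) t :=
    HasDerivAt.fun_sum fun i _ => (hasDerivAt_pi.mp h i).mul (hasDerivAt_pi.mp h i)
  refine hsum.congr_deriv ?_
  simp only [dotProduct, Finset.mul_sum]
  exact Finset.sum_congr rfl fun i _ => by ring

lemma le_mul_exp_of_hasDerivAt_le_neg_mul {W W' : ℝ → ℝ} {k : ℝ}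
    (hW : ∀ t, 0 ≤ t → HasDerivAt W (W' t) t) (hle : ∀ t, 0 ≤ t → W' t ≤ -k * W t)
    {t : ℝ} (ht : 0 ≤ t) : W t ≤ W 0 * Real.exp (-k * t) := by
  have := le_gronwallBound_of_liminf_deriv_right_le (f' := W') (δ := W 0) (K := -k) (ε := 0)
    (fun x hx => (hW x hx.1).continuousAt.continuousWithinAt)
    (fun x hx _ hr => (hW x hx.1).hasDerivWithinAt.liminf_right_slope_le hr) le_rfl
    (fun x hx => by simpa using hle x hx.1) t ⟨ht, le_rfl⟩
  simpa [gronwallBound_ε0] using this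

theorem tendsto_zero_of_dotProduct_le_neg_mul {ι : Type*} [Fintype ι]
    {F : (ι → ℝ) → ι → ℝ} {k : ℝ} (hk : 0 < k) (hF : ∀ x, x ⬝ᵥ F x ≤ -k * (x ⬝ᵥ x))
    {θ : ℝ → ι → ℝ} (hθ : ∀ t, 0 ≤ t → HasDerivAt θ (F (θ t)) t) :
    Tendsto θ atTop (𝓝 0) := by
  set W : ℝ → ℝ := fun t => θ t ⬝ᵥ θ t
  have hdecay : ∀ t, 0 ≤ t → W t ≤ W 0 * Real.exp (-(2 * k) * t) :=
    fun t => le_mul_exp_of_hasDerivAt_le_neg_mul (fun t ht => (hθ t ht).dotProduct_self)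
      (fun t _ => by nlinarith [hF (θ t)])
  have hW : Tendsto W atTop (𝓝 0) := by
    have hexp : Tendsto (fun t => W 0 * Real.exp (-(2 * k) * t)) atTop (𝓝 0) := by
      simpa using (Real.tendsto_exp_atBot.comp
        (tendsto_id.const_mul_atTop_of_neg (show -(2 * k) < 0 by linarith))).const_mul (W 0)
    refine tendsto_of_tendsto_of_tendsto_of_le_of_le' tendsto_const_nhds hexp
      (Eventually.of_forall fun t => dotProduct_self_star_nonneg (θ t)) ?_
    filter_upwards [eventually_ge_atTop 0] using hdecay
  refine squeeze_zero_norm (fun t => ?_) (by simpa using hW.sqrt)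
  refine (pi_norm_le_iff_of_nonneg (Real.sqrt_nonneg _)).mpr fun i => ?_
  rw [Real.norm_eq_abs]
  exact Real.abs_le_sqrt (Finset.single_le_sum (f := fun j => θ t j ^ 2)
    (fun j _ => sq_nonneg _) (Finset.mem_univ i) |>.trans_eq (by simp [W, dotProduct, sq]))

theorem stmt_10_general {S A : Type*} [Fintype S] [Fintype A] [Nonempty S] [Nonempty A]
    [DecidableEq S] [DecidableEq A] {n : ℕ}
    (μ : S × A → ℝ) (hμ : ∀ p, 0 < μ p)
    (P : Matrix (S × A) S ℝ) (hP0 : ∀ p s, 0 ≤ P p s) (hP1 : ∀ p, ∑ s, P p s = 1)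
    (γ : ℝ) (hγ : γ ∈ Set.Ioo (0 : ℝ) 1)
    (X : Matrix (S × A) (Fin n) ℝ) (hX : Function.Injective X.mulVec)
    (Pi : (S → A) → Matrix S (S × A) ℝ)
    (hPi : ∀ (π : S → A) (s : S) (p : S × A),
      Pi π s p = if p.1 = s ∧ p.2 = π s then 1 else 0)
    (η : ℝ)
    (hη : η > (Finset.univ.sup' Finset.univ_nonempty
        fun q : (S → A) × (S × A) =>
          γ * (μ ᵥ* (P * Pi q.1)) q.2 / (2 * μ q.2)) - (2 - γ) / 2) :
    (∀ θ : Fin n → ℝ, θ ≠ 0 → θ ⬝ᵥ limitField μ P γ η X θ < 0) ∧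
    (∀ θ : ℝ → Fin n → ℝ,
      (∀ t : ℝ, 0 ≤ t → HasDerivAt θ (limitField μ P γ η X (θ t)) t) →
      Filter.Tendsto θ Filter.atTop (nhds 0)) := by
  obtain rfl : Pi = policyMatrix := funext fun π => funext₂ (hPi π)
  set F : (S → A) × (S × A) → ℝ := fun q => γ * (μ ᵥ* (P * policyMatrix q.1)) q.2 / (2 * μ q.2)
  set M := Finset.univ.sup' Finset.univ_nonempty F
  have hkey := dotProduct_limitField_le (M := M) hμ hP0 hP1 hγ.1.le
    (fun π p => Finset.le_sup' F (Finset.mem_univ (π, p))) η X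
  have hmargin : 0 < 1 + η - γ / 2 - M := by linarith
  obtain ⟨c, hc, hcoercive⟩ := exists_pos_mul_dotProduct_self_le hμ X hX
  refine ⟨fun θ hθ => ?_, fun θ => tendsto_zero_of_dotProduct_le_neg_mul
    (mul_pos hmargin hc) fun θ => ?_⟩
  · have hpos := weightedNormSq_pos hμ ((hX.ne_iff' (mulVec_zero X)).mpr hθ)
    exact (hkey θ).trans_lt (mul_neg_of_neg_of_pos (by linarith) hpos)
  · calc θ ⬝ᵥ limitField μ P γ η X θ
        ≤ (M + γ / 2 - 1 - η) * weightedNormSq μ (X *ᵥ θ) := hkey θ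
      _ ≤ (M + γ / 2 - 1 - η) * (c * (θ ⬝ᵥ θ)) :=
          mul_le_mul_of_nonpos_left (hcoercive θ) (by linarith)
      _ = _ := by ring

/-- Under the regularization condition on `η`, the limiting vector field satisfies
`θᵀ f_∞(θ) < 0` for every nonzero `θ`, and the origin of the limiting ODE
`θ′ = f_∞(θ)` is globally asymptotically stable. -/
theorem stmt_10 {S A : Type*} [Fintype S] [Fintype A] [Nonempty S] [Nonempty A]
    [DecidableEq S] [DecidableEq A] {n : ℕ}
    (μ : S × A → ℝ) (hμ : ∀ p, 0 < μ p)
    (P : Matrix (S × A) S ℝ) (hP0 : ∀ p s, 0 ≤ P p s) (hP1 : ∀ p, ∑ s, P p s = 1)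
    (γ : ℝ) (hγ : γ ∈ Set.Ioo (0 : ℝ) 1)
    (X : Matrix (S × A) (Fin n) ℝ) (hX : Function.Injective X.mulVec)
    (Pi : (S → A) → Matrix S (S × A) ℝ)
    (hPi : ∀ (π : S → A) (s : S) (p : S × A),
      Pi π s p = if p.1 = s ∧ p.2 = π s then 1 else 0)
    (η : ℝ) (hη0 : 0 ≤ η)
    (hη : η > (Finset.univ.sup' Finset.univ_nonempty
        fun q : (S → A) × (S × A) =>
          γ * (μ ᵥ* (P * Pi q.1)) q.2 / (2 * μ q.2)) - (2 - γ) / 2) :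
    (∀ θ : Fin n → ℝ, θ ≠ 0 → θ ⬝ᵥ limitField μ P γ η X θ < 0) ∧
    (∀ θ : ℝ → Fin n → ℝ,
      (∀ t : ℝ, 0 ≤ t → HasDerivAt θ (limitField μ P γ η X (θ t)) t) →
      Filter.Tendsto θ Filter.atTop (nhds 0)) :=
  stmt_10_general μ hμ P hP0 hP1 γ hγ X hX Pi hPi η hη
end

section
/- Let f̄, f̲ : ℝⁿ → ℝⁿ be globally Lipschitz continuous. Assume f̄ is quasi-monotone increasing and f̲(v) ≤ f̄(v) componentwise for all v ∈ ℝⁿ. Let x, v : [0,∞) → ℝⁿ be differentiable with x′(t) = f̄(x(t)) and v′(t) = f̲(v(t)) for all t ≥ 0, and suppose v(0) ≤ x(0) componentwise. Then v(t) ≤ x(t) componentwise for all t ≥ 0. -/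
/-!
Let `g(t) = max (0, v₁(t) - x₁(t), …, vₙ(t) - xₙ(t))`, so `g(0) = 0`. At an index `j` where
`vⱼ - xⱼ` attains `g(t)`, we have `v(t) ≤ x(t) + g(t)` with equality in coordinate `j`, so
`f̲(v)ⱼ ≤ f̄(v)ⱼ ≤ f̄(x + g)ⱼ ≤ f̄(x)ⱼ + K g` by quasi-monotonicity and the Lipschitz bound.
Since the right Dini derivative of a finite maximum is controlled by the derivatives of the
functions attaining it, `g` satisfies `D⁺g ≤ K g`, and Grönwall's inequality forces `g = 0`.
-/

open Set Filter Topology Finset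
open scoped NNReal

def QuasiMonotone {ι α β : Type*} [Preorder α] [Preorder β] (f : (ι → α) → ι → β) : Prop :=
  ∀ i y z, y i = z i → (∀ j, j ≠ i → y j ≤ z j) → f y i ≤ f z i

theorem eventually_slope_finset_sup'_lt {ι : Type*} [Fintype ι] [Nonempty ι]
    {f : ι → ℝ → ℝ} {f' : ι → ℝ} {t r : ℝ}
    (hf : ∀ i, HasDerivWithinAt (f i) (f' i) (Ioi t) t)
    (hr : ∀ i, f i t = univ.sup' univ_nonempty (f · t) → f' i < r) :
    ∀ᶠ z in 𝓝[>] t, slope (fun s => univ.sup' univ_nonempty (f · s)) t z < r := by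
  set M : ℝ → ℝ := fun s => univ.sup' univ_nonempty (f · s)
  have hM : ContinuousWithinAt M (Ioi t) t :=
    ContinuousWithinAt.finset_sup'_apply _ fun i _ => (hf i).continuousWithinAt
  -- Near `t`, the maximum is attained only by functions that already attain it at `t`.
  have hlocal : ∀ i, ∀ᶠ z in 𝓝[>] t,
      (f i t < M t → f i z < M z) ∧ (f i t = M t → slope (f i) t z < r) := by
    intro i
    rcases (le_sup' (f · t) (mem_univ i)).lt_or_eq with hlt | heq
    · filter_upwards [(hf i).continuousWithinAt.eventually_lt hM hlt] with z hz
      exact ⟨fun _ => hz, fun h => absurd h hlt.ne⟩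
    · have hslope := (hasDerivWithinAt_iff_tendsto_slope' (lt_irrefl t)).1 (hf i)
      filter_upwards [hslope.eventually_lt_const (hr i heq)] with z hz
      exact ⟨fun h => absurd heq h.ne, fun _ => hz⟩
  filter_upwards [eventually_all.2 hlocal] with z hz
  obtain ⟨j, -, hj⟩ := exists_mem_eq_sup' univ_nonempty (f · z)
  have hjt : f j t = M t := by
    by_contra hne
    exact (hz j).1 ((le_sup' (f · t) (mem_univ j)).lt_of_ne hne) |>.ne hj.symm
  have hMj : slope M t z = slope (f j) t z := by
    simp only [slope_def_field]
    rw [hjt, ← hj]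
  exact hMj ▸ (hz j).2 hjt

theorem LipschitzWith.apply_add_const_le {ι : Type*} [Fintype ι] {f : (ι → ℝ) → ι → ℝ}
    {K : ℝ≥0} (hf : LipschitzWith K f) (b : ι → ℝ) {c : ℝ} (hc : 0 ≤ c) (j : ι) :
    f (b + fun _ => c) j ≤ f b j + K * c := by
  have hdist : dist (b + fun _ => c) b ≤ c := by
    rw [dist_self_add_left]
    exact (pi_norm_const_le c).trans (Real.norm_of_nonneg hc).le
  have := (dist_le_pi_dist _ _ j).trans <| (hf.dist_le_mul _ _).trans <|
    mul_le_mul_of_nonneg_left hdist K.2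
  rw [Real.dist_eq] at this
  linarith [le_abs_self (f (b + fun _ => c) j - f b j)]

theorem QuasiMonotone.apply_sub_apply_le {ι : Type*} [Fintype ι]
    {fbar flow : (ι → ℝ) → ι → ℝ} {K : ℝ≥0} (hquasi : QuasiMonotone fbar)
    (hK : LipschitzWith K fbar) (hle : ∀ w, flow w ≤ fbar w) {a b : ι → ℝ} {c : ℝ}
    (hc : 0 ≤ c) (hab : a ≤ b + fun _ => c) {j : ι} (hj : a j = b j + c) :
    flow a j - fbar b j ≤ K * c := by
  have : flow a j ≤ fbar b j + K * c :=
    calc flow a j ≤ fbar a j := hle a j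
      _ ≤ fbar (b + fun _ => c) j := hquasi j _ _ hj fun k _ => hab k
      _ ≤ fbar b j + K * c := hK.apply_add_const_le b hc j
  linarith

theorem le_of_hasDerivAt_of_quasiMonotone {ι : Type*} [Fintype ι]
    {fbar flow : (ι → ℝ) → ι → ℝ} {K : ℝ≥0} (hquasi : QuasiMonotone fbar)
    (hK : LipschitzWith K fbar) (hle : ∀ w, flow w ≤ fbar w) {x v : ℝ → ι → ℝ}
    (hx : ∀ t, 0 ≤ t → HasDerivAt x (fbar (x t)) t)
    (hv : ∀ t, 0 ≤ t → HasDerivAt v (flow (v t)) t) (h0 : v 0 ≤ x 0) {T : ℝ} (hT : 0 ≤ T) :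
    v T ≤ x T := by
  -- Indexing by `Option ι` adds the constant `0` to the family, and keeps it nonempty.
  let e : Option ι → ℝ → ℝ := fun o s => o.elim 0 fun j => v s j - x s j
  let g : ℝ → ℝ := fun s => univ.sup' univ_nonempty (e · s)
  have hle_g : ∀ o s, e o s ≤ g s := fun o s => le_sup' (e · s) (mem_univ o)
  have he_deriv : ∀ t, 0 ≤ t → ∀ o,
      HasDerivAt (e o) (o.elim 0 fun j => flow (v t) j - fbar (x t) j) t
    | _, _, none => hasDerivAt_const _ _
    | t, ht, some j => (hasDerivAt_pi.1 (hv t ht) j).sub (hasDerivAt_pi.1 (hx t ht) j)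
  have hg_cont : ContinuousOn g (Icc 0 T) := fun t ht =>
    (ContinuousAt.finset_sup'_apply _ fun o _ =>
      (he_deriv t ht.1 o).continuousAt).continuousWithinAt
  have hg_slope : ∀ t ∈ Ico 0 T, ∀ r, K * g t < r →
      ∃ᶠ z in 𝓝[>] t, (z - t)⁻¹ * (g z - g t) < r := by
    intro t ht r hr
    refine (eventually_slope_finset_sup'_lt
      (fun o => (he_deriv t ht.1 o).hasDerivWithinAt) ?_).frequently
    have hg_nonneg : 0 ≤ g t := hle_g none t
    rintro (_ | j) hj
    · exact (mul_nonneg K.2 hg_nonneg).trans_lt hr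
    · refine (hquasi.apply_sub_apply_le hK hle hg_nonneg (fun k => ?_) ?_).trans_lt hr
      · exact sub_le_iff_le_add'.1 (hle_g (some k) t)
      · linarith [show v t j - x t j = g t from hj]
  have hg0 : g 0 ≤ 0 :=
    sup'_le _ _ fun o _ => o.rec le_rfl fun j => sub_nonpos.2 (h0 j)
  have hgT := le_gronwallBound_of_liminf_deriv_right_le hg_cont hg_slope hg0
    (fun t _ => (add_zero _).ge) T ⟨hT, le_rfl⟩
  rw [gronwallBound_ε0_δ0] at hgT
  exact fun i => sub_nonpos.1 ((hle_g (some i) T).trans hgT)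

theorem stmt_11_general {n : ℕ} (fbar flow : (Fin n → ℝ) → (Fin n → ℝ))
    (hbarLip : ∃ K : NNReal, LipschitzWith K fbar)
    (hquasi : ∀ (i : Fin n) (y z : Fin n → ℝ), y i = z i →
      (∀ j : Fin n, j ≠ i → y j ≤ z j) → fbar y i ≤ fbar z i)
    (hle : ∀ v : Fin n → ℝ, ∀ i, flow v i ≤ fbar v i)
    (x v : ℝ → Fin n → ℝ)
    (hx : ∀ t : ℝ, 0 ≤ t → HasDerivAt x (fbar (x t)) t)
    (hv : ∀ t : ℝ, 0 ≤ t → HasDerivAt v (flow (v t)) t)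
    (h0 : ∀ i, v 0 i ≤ x 0 i) :
    ∀ t : ℝ, 0 ≤ t → ∀ i, v t i ≤ x t i := by
  obtain ⟨K, hK⟩ := hbarLip
  exact fun t ht => le_of_hasDerivAt_of_quasiMonotone hquasi hK hle hx hv h0 ht

/-- Vector comparison principle: if `f̄` is globally Lipschitz and quasi-monotone
increasing, `f̲` is globally Lipschitz with `f̲(v) ≤ f̄(v)` componentwise, and
`x′ = f̄(x)`, `v′ = f̲(v)` with `v(0) ≤ x(0)` componentwise, then `v(t) ≤ x(t)`
componentwise for all `t ≥ 0`. -/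
theorem stmt_11 {n : ℕ} (fbar flow : (Fin n → ℝ) → (Fin n → ℝ))
    (hbarLip : ∃ K : NNReal, LipschitzWith K fbar)
    (hlowLip : ∃ K : NNReal, LipschitzWith K flow)
    (hquasi : ∀ (i : Fin n) (y z : Fin n → ℝ), y i = z i →
      (∀ j : Fin n, j ≠ i → y j ≤ z j) → fbar y i ≤ fbar z i)
    (hle : ∀ v : Fin n → ℝ, ∀ i, flow v i ≤ fbar v i)
    (x v : ℝ → Fin n → ℝ)
    (hx : ∀ t : ℝ, 0 ≤ t → HasDerivAt x (fbar (x t)) t)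
    (hv : ∀ t : ℝ, 0 ≤ t → HasDerivAt v (flow (v t)) t)
    (h0 : ∀ i, v 0 i ≤ x 0 i) :
    ∀ t : ℝ, 0 ≤ t → ∀ i, v t i ≤ x t i :=
  stmt_11_general fbar flow hbarLip hquasi hle x v hx hv h0
end
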